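/- For all real numbers a, b with 0 < b ≤ a ≤ 1, the quantity f(a,b) = ∫₀¹ ℓ( λ( [0,b] ∩ ([u, u+a] mod 1) ) ) du satisfies f(a,b) ≤ a·b·log₂(1/b) + a·b. -/

import Mathlib

/-!
For almost every `u`, the arc `[u, u + a] mod 1` meets `[0, b]` in `[u, b]` and, when it wraps
around, also in `[0, min b (u + a - 1)]`; these overlap in at most one point, so the measure is
`(b - u)⁺ + clamp(u + a - 1, 0, b)`. Since `ℓ` is subadditive on `[0, ∞)`, `f(a,b)` is at most
`∫₀¹ ℓ((b - u)⁺) du + ∫₀¹ ℓ(clamp(u + a - 1, 0, b)) du = 2 ∫₀ᵇ ℓ + (a - b) ℓ(b)`, and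
`∫₀ᵇ ℓ = b²/(4 ln 2) - (b²/2) log₂ b` evaluates this to `a b log₂(1/b) + b²/(2 ln 2)`.
The last term is at most `a b` because `b ≤ a` and `2 ln 2 > 1`.
-/

open scoped BigOperators

noncomputable section

namespace GW

/-- `ℓ(t) = −t·log₂ t` (with `ℓ(0) = 0`, since `Real.logb 2 0 = 0`). -/
def ell (t : ℝ) : ℝ := -(t * Real.logb 2 t)

/-- `f(a,b) = ∫₀¹ ℓ( λ([0,b] ∩ ([u, u+a] mod 1)) ) du`, where `A mod 1` is the image of `A`
under reduction modulo 1 (the fractional part), and `λ` is Lebesgue measure. -/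
def f (a b : ℝ) : ℝ :=
  ∫ u in (0:ℝ)..1,
    ell ((MeasureTheory.volume (Set.Icc (0:ℝ) b ∩ (Int.fract '' Set.Icc u (u + a)))).toReal)

open MeasureTheory Set Real intervalIntegral

lemma negMulLog_add_le {x y : ℝ} (hx : 0 ≤ x) (hy : 0 ≤ y) :
    negMulLog (x + y) ≤ negMulLog x + negMulLog y := by
  rcases hx.eq_or_lt with rfl | hx'
  · simp
  rcases hy.eq_or_lt with rfl | hy'
  · simp
  have hlogx : x * log x ≤ x * log (x + y) := by gcongr; linarith
  have hlogy : y * log y ≤ y * log (x + y) := by gcongr; linarith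
  simp only [negMulLog]
  linarith

lemma integral_negMulLog {b : ℝ} (hb : 0 ≤ b) :
    ∫ t in 0..b, negMulLog t = b ^ 2 / 4 - b ^ 2 / 2 * log b := by
  have hF : ∀ t ∈ Ioo 0 b,
      HasDerivAt (fun t => t ^ 2 / 4 - t / 2 * (t * log t)) (negMulLog t) t := by
    intro t ht
    refine (((hasDerivAt_pow 2 t).div_const 4).sub
      (((hasDerivAt_id t).div_const 2).mul (hasDerivAt_mul_log ht.1.ne'))).congr_deriv ?_
    simp only [negMulLog_def, id]
    ring
  rw [integral_eq_sub_of_hasDerivAt_of_le hb (by fun_prop) hF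
    (continuous_negMulLog.intervalIntegrable 0 b)]
  ring

lemma image_fract_Icc_of_lt_one {u v : ℝ} (hu : 0 ≤ u) (hv : v < 1) :
    Int.fract '' Icc u v = Icc u v := by
  rw [image_congr fun x hx => Int.fract_eq_self.2 ⟨hu.trans hx.1, hx.2.trans_lt hv⟩, image_id']

lemma image_fract_Icc_of_one_le {u v : ℝ} (hu : 0 ≤ u) (hu1 : u ≤ 1) (hv1 : 1 ≤ v) (hv2 : v < 2) :
    Int.fract '' Icc u v = Ico u 1 ∪ Icc 0 (v - 1) := by
  have hlow : Int.fract '' Ico u 1 = Ico u 1 := by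
    rw [image_congr fun x hx => Int.fract_eq_self.2 ⟨hu.trans hx.1, hx.2⟩, image_id']
  have hhigh : Int.fract '' Icc 1 v = Icc 0 (v - 1) := by
    rw [image_congr fun x hx => ?_, image_sub_const_Icc, sub_self]
    rw [← Int.fract_sub_one, Int.fract_eq_self]
    constructor <;> linarith [hx.1, hx.2]
  rw [← Ico_union_Icc_eq_Icc hu1 hv1, image_union, hlow, hhigh]

lemma volume_Icc_inter_image_fract {a b u : ℝ} (hb : 0 ≤ b) (hba : b ≤ a) (ha : a ≤ 1)
    (hu0 : 0 ≤ u) (hu1 : u < 1) (hua : u + a ≠ 1) :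
    (volume (Icc 0 b ∩ Int.fract '' Icc u (u + a))).toReal
      = max 0 (b - u) + max 0 (min b (u + a - 1)) := by
  rcases hua.lt_or_gt with hua | hua
  · rw [image_fract_Icc_of_lt_one hu0 hua, Icc_inter_Icc, max_eq_right hu0,
      min_eq_left (by linarith), Real.volume_Icc, ENNReal.toReal_ofReal', max_comm,
      min_eq_right (by linarith), max_eq_left (b := u + a - 1) (by linarith), add_zero]
  · have hsplit : (Icc 0 b ∩ Int.fract '' Icc u (u + a) : Set ℝ)
        =ᵐ[volume] (Icc u b ∪ Icc 0 (min b (u + a - 1)) : Set ℝ) := by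
      rw [image_fract_Icc_of_one_le hu0 hu1.le hua.le (by linarith)]
      have hIcc : Icc 0 b ∩ (Icc u 1 ∪ Icc 0 (u + a - 1))
          = Icc u b ∪ Icc 0 (min b (u + a - 1)) := by
        rw [inter_union_distrib_left, Icc_inter_Icc, Icc_inter_Icc, max_eq_right hu0,
          min_eq_left (hba.trans ha), max_self]
      exact ((ae_eq_refl _).inter (Ico_ae_eq_Icc.union (ae_eq_refl _))).trans hIcc.eventuallyEq
    have hdisj : AEDisjoint volume (Icc u b) (Icc 0 (min b (u + a - 1))) := by
      refine measure_mono_null (fun x hx => ?_) (measure_singleton u)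
      exact le_antisymm (hx.2.2.trans ((min_le_right _ _).trans (by linarith))) hx.1.1
    rw [measure_congr hsplit, measure_union₀ measurableSet_Icc.nullMeasurableSet hdisj,
      Real.volume_Icc, Real.volume_Icc, ENNReal.toReal_add ENNReal.ofReal_ne_top
      ENNReal.ofReal_ne_top, ENNReal.toReal_ofReal', ENNReal.toReal_ofReal', sub_zero,
      max_comm, max_comm (min _ _)]

lemma integral_comp_max_zero_min {φ : ℝ → ℝ} (hφ : Continuous φ) (hφ0 : φ 0 = 0) {b c d : ℝ}
    (hc : c ≤ 0) (hb : 0 ≤ b) (hd : b ≤ d) :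
    ∫ v in c..d, φ (max 0 (min b v)) = (∫ v in 0..b, φ v) + (d - b) * φ b := by
  have hint : ∀ p q, IntervalIntegrable (fun v => φ (max 0 (min b v))) volume p q :=
    fun p q => (by fun_prop : Continuous fun v => φ (max 0 (min b v))).intervalIntegrable p q
  rw [← integral_add_adjacent_intervals (hint c 0) (hint 0 d),
    ← integral_add_adjacent_intervals (hint 0 b) (hint b d)]
  have hneg : ∫ v in c..0, φ (max 0 (min b v)) = 0 := by
    rw [integral_congr (g := fun _ => 0) fun v hv => ?_, intervalIntegral.integral_zero]
    rw [uIcc_of_le hc] at hv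
    simp [min_eq_right (hv.2.trans hb), max_eq_left hv.2, hφ0]
  have hmid : ∫ v in 0..b, φ (max 0 (min b v)) = ∫ v in 0..b, φ v := by
    refine integral_congr fun v hv => ?_
    rw [uIcc_of_le hb] at hv
    simp [min_eq_right hv.2, max_eq_right hv.1]
  have htop : ∫ v in b..d, φ (max 0 (min b v)) = (d - b) * φ b := by
    rw [integral_congr (g := fun _ => φ b) fun v hv => ?_, intervalIntegral.integral_const,
      smul_eq_mul]
    rw [uIcc_of_le hd] at hv
    simp [min_eq_left hv.1, max_eq_right hb]
  rw [hneg, hmid, htop, zero_add]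

lemma integral_comp_max_zero_sub {φ : ℝ → ℝ} (hφ : Continuous φ) (hφ0 : φ 0 = 0) {b : ℝ}
    (hb0 : 0 ≤ b) (hb1 : b ≤ 1) :
    ∫ u in 0..1, φ (max 0 (b - u)) = ∫ v in 0..b, φ v := by
  rw [integral_comp_sub_left (fun v => φ (max 0 v)), sub_zero,
    integral_congr (g := fun v => φ (max 0 (min b v))) fun v hv => ?_,
    integral_comp_max_zero_min hφ hφ0 (by linarith) hb0 le_rfl, sub_self, zero_mul, add_zero]
  rw [uIcc_of_le (by linarith)] at hv
  simp [min_eq_right hv.2]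

lemma integral_comp_max_zero_min_add {φ : ℝ → ℝ} (hφ : Continuous φ) (hφ0 : φ 0 = 0) {a b : ℝ}
    (hb : 0 ≤ b) (hba : b ≤ a) (ha : a ≤ 1) :
    ∫ u in 0..1, φ (max 0 (min b (u + a - 1))) = (∫ v in 0..b, φ v) + (a - b) * φ b := by
  simp_rw [add_sub_assoc]
  rw [integral_comp_add_right (fun v => φ (max 0 (min b v))), zero_add, add_sub_cancel,
    integral_comp_max_zero_min hφ hφ0 (by linarith) hb hba]

lemma ell_eq_negMulLog_div (t : ℝ) : ell t = negMulLog t / log 2 := by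
  rw [ell, negMulLog, logb]; ring

lemma continuous_ell : Continuous ell := by
  simp_rw [funext ell_eq_negMulLog_div]
  fun_prop

lemma ell_add_le {x y : ℝ} (hx : 0 ≤ x) (hy : 0 ≤ y) : ell (x + y) ≤ ell x + ell y := by
  simp only [ell_eq_negMulLog_div, ← add_div]
  gcongr
  exact negMulLog_add_le hx hy

lemma integral_ell_add_le {g h : ℝ → ℝ} (hg : Continuous g) (hh : Continuous h)
    (hg0 : ∀ u, 0 ≤ g u) (hh0 : ∀ u, 0 ≤ h u) {p q : ℝ} (hpq : p ≤ q) :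
    ∫ u in p..q, ell (g u + h u) ≤ (∫ u in p..q, ell (g u)) + ∫ u in p..q, ell (h u) := by
  have hint : ∀ k : ℝ → ℝ, Continuous k → IntervalIntegrable (fun u => ell (k u)) volume p q :=
    fun k hk => (continuous_ell.comp hk).intervalIntegrable p q
  rw [← integral_add (hint g hg) (hint h hh)]
  exact integral_mono_on hpq (hint _ (hg.add hh)) ((hint g hg).add (hint h hh))
    fun u _ => ell_add_le (hg0 u) (hh0 u)

lemma f_eq_integral_ell {a b : ℝ} (hb : 0 ≤ b) (hba : b ≤ a) (ha : a ≤ 1) :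
    f a b = ∫ u in 0..1, ell (max 0 (b - u) + max 0 (min b (u + a - 1))) := by
  refine integral_congr_ae ?_
  have hnull : volume ({1, 1 - a} : Set ℝ) = 0 := (toFinite _).measure_zero volume
  filter_upwards [measure_eq_zero_iff_ae_notMem.mp hnull] with u hu hmem
  rw [uIoc_of_le zero_le_one] at hmem
  have hu1 : u ≠ 1 := fun h => hu (by simp [h])
  have hua : u + a ≠ 1 := fun h => hu (by simp [← h])
  rw [volume_Icc_inter_image_fract hb hba ha hmem.1.le (hmem.2.lt_of_ne hu1) hua]

lemma two_mul_integral_ell_add_le {a b : ℝ} (hb : 0 < b) (hba : b ≤ a) :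
    2 * (∫ t in 0..b, ell t) + (a - b) * ell b ≤ a * b * logb 2 (1 / b) + a * b := by
  have hlog2 : 1 / 2 < log 2 := by linarith [log_two_gt_d9]
  simp_rw [ell_eq_negMulLog_div]
  rw [intervalIntegral.integral_div, integral_negMulLog hb.le, logb, one_div, log_inv]
  calc 2 * ((b ^ 2 / 4 - b ^ 2 / 2 * log b) / log 2) + (a - b) * (negMulLog b / log 2)
      = a * b * (-log b / log 2) + b ^ 2 / (2 * log 2) := by
        rw [negMulLog_def]
        field_simp
        ring
    _ ≤ a * b * (-log b / log 2) + a * b := by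
        gcongr
        rw [div_le_iff₀ (by linarith)]
        nlinarith [mul_le_mul_of_nonneg_right hba hb.le, mul_pos (hb.trans_le hba) hb]

/-- for `0 < b ≤ a ≤ 1`, `f(a,b) ≤ a·b·log₂(1/b) + a·b`. -/
theorem stmt16 (a b : ℝ) (hb : 0 < b) (hba : b ≤ a) (ha : a ≤ 1) :
    f a b ≤ a * b * Real.logb 2 (1 / b) + a * b := by
  have hell0 : ell 0 = 0 := by simp [ell]
  calc f a b = ∫ u in 0..1, ell (max 0 (b - u) + max 0 (min b (u + a - 1))) :=
        f_eq_integral_ell hb.le hba ha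
    _ ≤ (∫ u in 0..1, ell (max 0 (b - u))) + ∫ u in 0..1, ell (max 0 (min b (u + a - 1))) :=
        integral_ell_add_le (by fun_prop) (by fun_prop) (fun _ => le_max_left _ _)
          (fun _ => le_max_left _ _) zero_le_one
    _ = 2 * (∫ t in 0..b, ell t) + (a - b) * ell b := by
        rw [integral_comp_max_zero_sub continuous_ell hell0 hb.le (hba.trans ha),
          integral_comp_max_zero_min_add continuous_ell hell0 hb.le hba ha]
        ring
    _ ≤ a * b * Real.logb 2 (1 / b) + a * b := two_mul_integral_ell_add_le hb hba

end GW
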